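/- There exists a constant c > 0 such that the following holds. For every finite simple graph G on n ≥ 2 vertices, every integer k ≥ 1, and every integer λ with 1 ≤ λ ≤ log₂ n, there is a partition of the vertex set of G into λ cluster collections (color classes), each being a cluster collection with Steiner radius ⌈c·k·n^{1/λ}·(log₂ n)³⌉ (and some congestion), such that any two distinct clusters in the same collection have dist_G strictly greater than k. -/

import Mathlib

/-!
Ball carving. Put `t = ⌈n^{1/λ}⌉`. A color class is carved out of the set `R` of vertices not
yet clustered: pick `v ∈ R` and let `B_r` be the vertices of `R` within distance `r k` of `v`.
Before the first `r` with `t |B_{r+1}| ≤ (t + 1) |B_r|` the balls grow by a factor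
`(t + 1) / t` per step, so `(t + 1)^r ≤ n t^r`, i.e. `r ≤ (t + 1) ln n = O(n^{1/λ} log n)`.
`B_r` becomes a cluster, the shell `B_{r+1} \ B_r` is deferred to the later colors, and the
rest of `R`, at distance more than `k` from `B_r`, is carved recursively. The deferred vertices
form at most a `1 / (t + 1)` fraction of `R`, and `n < (t + 1)^λ`, so `λ` colors suffice. The
Steiner subgraph of a cluster is the ball around its center, of diameter at most `2 r k`.
-/

open SimpleGraph

/-- `FarApart G k A B` : the `G`-distance between the vertex sets `A` and `B` is
strictly greater than `k`, i.e. every walk between a vertex of `A` and a vertex of `B`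
has length greater than `k`. -/
def FarApart {V : Type} (G : SimpleGraph V) (k : ℕ) (A B : Set V) : Prop :=
  ∀ u ∈ A, ∀ v ∈ B, ∀ p : G.Walk u v, k < p.length

/-- A cluster collection with Steiner radius `β` and congestion `κ` in `G`:
pairwise disjoint clusters, each contained in an associated connected Steiner subgraph
in which any two vertices are joined by a path of length at most `β`, and every edge of
`G` lies in at most `κ` of the Steiner subgraphs. -/
structure ClusterCollection {V : Type} (G : SimpleGraph V) (β κ : ℕ) where
  p : ℕ
  cluster : Fin p → Set V
  tree : Fin p → G.Subgraph
  disjoint : ∀ i j, i ≠ j → Disjoint (cluster i) (cluster j)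
  subset_tree : ∀ i, cluster i ⊆ (tree i).verts
  connected : ∀ i, ((tree i).coe).Preconnected
  radius : ∀ i, ∀ u v : (tree i).verts, ∃ w : ((tree i).coe).Walk u v, w.length ≤ β
  congestion : ∀ e ∈ G.edgeSet, {i : Fin p | e ∈ (tree i).edgeSet}.ncard ≤ κ

/-- A weak `(C, β)`-network decomposition with cluster distance `k` and congestion `κ`:
a partition of the vertices into `C` cluster collections (color classes), each with
Steiner radius `β` and congestion `κ`, such that any two distinct clusters of the same
color class are at `G`-distance strictly greater than `k`. -/
structure NetworkDecomposition {V : Type} (G : SimpleGraph V) (C β κ k : ℕ) where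
  coll : Fin C → ClusterCollection G β κ
  cover : ∀ v : V, ∃! ci : (c : Fin C) × Fin (coll c).p, v ∈ (coll ci.1).cluster ci.2
  sep : ∀ c : Fin C, ∀ i j : Fin (coll c).p, i ≠ j →
    FarApart G k ((coll c).cluster i) ((coll c).cluster j)


theorem existsUnique_mem_sdiff_succ {α : Type*} {S : ℕ → Set α} (hS : Antitone S) {L : ℕ}
    {x : α} (h0 : x ∈ S 0) (hL : x ∉ S L) : ∃! c : Fin L, x ∈ S c ∧ x ∉ S (c + 1) := by
  classical
  have hle : ∀ a b : ℕ, x ∈ S b → x ∉ S (a + 1) → b ≤ a := fun a b hb ha => by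
    by_contra! h
    exact ha (hS h hb)
  have hex : ∃ c, x ∉ S c := ⟨L, hL⟩
  obtain ⟨c, hc⟩ : ∃ c, Nat.find hex = c + 1 :=
    Nat.exists_eq_add_one.2 (Nat.pos_of_ne_zero fun h => Nat.find_spec hex (h ▸ h0))
  have hxc : x ∈ S c := not_not.1 (Nat.find_min hex (by omega))
  have hxc₁ : x ∉ S (c + 1) := hc ▸ Nat.find_spec hex
  refine ⟨⟨c, lt_of_not_ge fun h => hL (hS h hxc)⟩, ⟨hxc, hxc₁⟩, ?_⟩
  rintro c' ⟨hx', hx'₁⟩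
  exact Fin.ext (le_antisymm (hle _ _ hx' hxc₁) (hle _ _ hxc hx'₁))

namespace SimpleGraph

variable {V : Type} (G : SimpleGraph V)

def walkBall (v : V) (m : ℕ) : Set V := {u | ∃ p : G.Walk v u, p.length ≤ m}

variable {G}

theorem self_mem_walkBall (v : V) (m : ℕ) : v ∈ G.walkBall v m := ⟨.nil, Nat.zero_le m⟩

theorem walkBall_mono (v : V) {m m' : ℕ} (h : m ≤ m') : G.walkBall v m ⊆ G.walkBall v m' :=
  fun _ ⟨p, hp⟩ => ⟨p, hp.trans h⟩

theorem exists_walk_induce_walkBall {v u : V} {m : ℕ} (hu : u ∈ G.walkBall v m) :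
    ∃ q : ((⊤ : G.Subgraph).induce (G.walkBall v m)).coe.Walk ⟨v, self_mem_walkBall v m⟩ ⟨u, hu⟩,
      q.length ≤ m := by
  classical
  obtain ⟨p, hp⟩ := hu
  have hsupp : ∀ x ∈ p.support, x ∈ G.walkBall v m := fun x hx =>
    ⟨p.takeUntil x hx, (p.length_takeUntil_le_length hx).trans hp⟩
  have hlen := congrArg Walk.length (p.map_induce hsupp)
  rw [Walk.length_map] at hlen
  exact ⟨(p.induce _ hsupp).mapLe (induce_eq_coe_induce_top _).le,
    (Walk.length_mapLe _ _).trans_le (hlen ▸ hp)⟩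

end SimpleGraph

section FarApart

variable {V : Type} {G : SimpleGraph V} {k : ℕ} {A B : Set V}

theorem FarApart.symm (h : FarApart G k A B) : FarApart G k B A :=
  fun u hu v hv p => by simpa using h v hv u hu p.reverse

theorem FarApart.disjoint (h : FarApart G k A B) : Disjoint A B :=
  Set.disjoint_left.2 fun u hA hB => (h u hA u hB .nil).not_ge (Nat.zero_le k)

theorem FarApart.mono {A' B' : Set V} (h : FarApart G k A B) (hA : A' ⊆ A) (hB : B' ⊆ B) :
    FarApart G k A' B' :=
  fun u hu v hv => h u (hA hu) v (hB hv)

theorem farApart_walkBall_compl (v : V) (m : ℕ) :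
    FarApart G k (G.walkBall v m) (G.walkBall v (m + k))ᶜ := by
  intro u ⟨q, hq⟩ w hw p
  by_contra! hp
  exact hw ⟨q.append p, by rw [Walk.length_append]; omega⟩

end FarApart

theorem List.Pairwise.rel_get_of_ne {α : Type*} {R : α → α → Prop} {l : List α}
    (h : l.Pairwise R) (hR : ∀ {a b}, R a b → R b a) {i j : Fin l.length} (hij : i ≠ j) :
    R (l.get i) (l.get j) := by
  rcases lt_or_gt_of_ne hij with hlt | hlt
  exacts [h.rel_get_of_lt hlt, hR (h.rel_get_of_lt hlt)]

namespace ClusterCollection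

variable {V : Type} {G : SimpleGraph V}

noncomputable def ofBalls {β κ ρ : ℕ} (cs : List (V × Set V)) (hβ : 2 * ρ ≤ β)
    (hκ : cs.length ≤ κ) (hball : ∀ e ∈ cs, e.2 ⊆ G.walkBall e.1 ρ)
    (hdisj : cs.Pairwise fun a b => Disjoint a.2 b.2) : ClusterCollection G β κ where
  p := cs.length
  cluster i := (cs.get i).2
  tree i := (⊤ : G.Subgraph).induce (G.walkBall (cs.get i).1 ρ)
  disjoint _ _ hij := hdisj.rel_get_of_ne (fun h => h.symm) hij
  subset_tree i := hball _ (List.get_mem cs i)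
  connected i u w := by
    obtain ⟨q₁, -⟩ := exists_walk_induce_walkBall u.2
    obtain ⟨q₂, -⟩ := exists_walk_induce_walkBall w.2
    exact ⟨q₁.reverse.append q₂⟩
  radius i u w := by
    obtain ⟨q₁, h₁⟩ := exists_walk_induce_walkBall u.2
    obtain ⟨q₂, h₂⟩ := exists_walk_induce_walkBall w.2
    exact ⟨q₁.reverse.append q₂, by rw [Walk.length_append, Walk.length_reverse]; omega⟩
  congestion _ _ := (Set.ncard_le_card _).trans (by simpa using hκ)

end ClusterCollection

theorem Nat.exists_pow_le_mul_pow_and_mul_le (t N : ℕ) (b : ℕ → ℕ) (hb0 : 0 < b 0)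
    (hb : ∀ r, b r ≤ N) : ∃ r, (t + 1) ^ r ≤ N * t ^ r ∧ t * b (r + 1) ≤ (t + 1) * b r := by
  by_contra! hfast
  have hgrowth : ∀ r, (t + 1) ^ r * b 0 ≤ t ^ r * b r ∧ r ≤ b r := by
    intro r
    induction r with
    | zero => simp
    | succ r ih =>
      have hstep : (t + 1) * b r < t * b (r + 1) := hfast r <|
        calc (t + 1) ^ r ≤ (t + 1) ^ r * b 0 := Nat.le_mul_of_pos_right _ hb0
          _ ≤ t ^ r * b r := ih.1
          _ ≤ N * t ^ r := by rw [mul_comm]; exact Nat.mul_le_mul_right _ (hb r)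
      refine ⟨?_, ?_⟩
      · calc (t + 1) ^ (r + 1) * b 0 = (t + 1) * ((t + 1) ^ r * b 0) := by ring
          _ ≤ (t + 1) * (t ^ r * b r) := Nat.mul_le_mul_left _ ih.1
          _ = t ^ r * ((t + 1) * b r) := by ring
          _ ≤ t ^ r * (t * b (r + 1)) := Nat.mul_le_mul_left _ hstep.le
          _ = t ^ (r + 1) * b (r + 1) := by ring
      · have : b r < b (r + 1) := by
          by_contra! h
          nlinarith [Nat.mul_le_mul_left t h]
        omega
  have := hb (N + 1)
  have := (hgrowth (N + 1)).2
  omega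

section Carving

variable {V : Type} [Fintype V] (G : SimpleGraph V) {k t ρ : ℕ}

theorem exists_colorClass (hρ : ∀ r, (t + 1) ^ r ≤ Fintype.card V * t ^ r → r * k ≤ ρ)
    (R : Finset V) :
    ∃ (cs : List (V × Set V)) (D : Finset V),
      (∀ e ∈ cs, e.2 ⊆ G.walkBall e.1 ρ) ∧ cs.Pairwise (fun a b => FarApart G k a.2 b.2) ∧
      D ⊆ R ∧ (∀ x, x ∈ R ∧ x ∉ D ↔ ∃ e ∈ cs, x ∈ e.2) ∧ (t + 1) * D.card ≤ R.card := by
  classical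
  induction R using Finset.strongInduction with | H R ih => ?_
  rcases R.eq_empty_or_nonempty with rfl | ⟨v, hv⟩
  · exact ⟨[], ∅, by simp, .nil, by simp, by simp, by simp⟩
  let ball (r : ℕ) : Finset V := R.filter (· ∈ G.walkBall v (r * k))
  obtain ⟨r, hr, hslow⟩ := Nat.exists_pow_le_mul_pow_and_mul_le t R.card (fun r => (ball r).card)
    (Finset.card_pos.2 ⟨v, by simp [ball, hv, self_mem_walkBall]⟩)
    (fun r => Finset.card_filter_le _ _)
  set C := ball r
  set B := ball (r + 1)
  have hCB : C ⊆ B := Finset.monotone_filter_right R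
    (fun _ _ hx => walkBall_mono v (Nat.mul_le_mul_right k r.le_succ) hx)
  have hBR : B ⊆ R := Finset.filter_subset _ _
  obtain ⟨cs, D, hball, hfar, hDR, hcover, hcard⟩ :=
    ih (R \ B) (Finset.sdiff_ssubset hBR ⟨v, hCB (by simp [C, ball, hv, self_mem_walkBall])⟩)
  refine ⟨(v, C) :: cs, (B \ C) ∪ D, ?_, ?_, ?_, ?_, ?_⟩
  · have hC : (C : Set V) ⊆ G.walkBall v ρ := fun x hx =>
      walkBall_mono v (hρ r (hr.trans (Nat.mul_le_mul_right _ R.card_le_univ)))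
        (Finset.mem_filter.1 hx).2
    simpa [hC] using hball
  · refine List.pairwise_cons.2 ⟨fun e he => (farApart_walkBall_compl v (r * k)).mono
      (fun x hx => (Finset.mem_filter.1 hx).2) fun x hx hxB => ?_, hfar⟩
    obtain ⟨hxR, hxB'⟩ := Finset.mem_sdiff.1 ((hcover x).2 ⟨e, he, hx⟩).1
    exact hxB' (Finset.mem_filter.2 ⟨hxR, by rwa [Nat.succ_mul]⟩)
  · exact Finset.union_subset (Finset.sdiff_subset.trans hBR) (hDR.trans Finset.sdiff_subset)
  · intro x
    have := hcover x
    have := @hCB x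
    have := @hBR x
    have := @hDR x
    simp only [Finset.mem_union, Finset.mem_sdiff, Finset.mem_coe, List.mem_cons,
      exists_eq_or_imp] at *
    grind
  · have hB : (B \ C).card + C.card = B.card := Finset.card_sdiff_add_card_eq_card hCB
    have hR : (R \ B).card + B.card = R.card := Finset.card_sdiff_add_card_eq_card hBR
    have := Finset.card_union_le (B \ C) D
    nlinarith

theorem exists_networkDecomposition {β L : ℕ}
    (hβ : ∀ r, (t + 1) ^ r ≤ Fintype.card V * t ^ r → 2 * (r * k) ≤ β)
    (hL : Fintype.card V < (t + 1) ^ L) : ∃ κ, Nonempty (NetworkDecomposition G L β κ k) := by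
  choose cs D hball hfar hDR hcover hcard using
    exists_colorClass G (k := k) (t := t) (ρ := β / 2) fun r hr => by have := hβ r hr; omega
  let S (c : ℕ) : Finset V := D^[c] Finset.univ
  have hS (c : ℕ) : S (c + 1) = D (S c) := Function.iterate_succ_apply' _ _ _
  have hanti : Antitone fun c => (S c : Set V) :=
    antitone_nat_of_succ_le fun c => by simpa [hS] using hDR (S c)
  have hsize (c : ℕ) : (t + 1) ^ c * (S c).card ≤ Fintype.card V := by
    induction c with
    | zero => simpa using Finset.card_le_univ _
    | succ c ih => rw [hS, pow_succ, mul_assoc]; exact (Nat.mul_le_mul_left _ (hcard _)).trans ih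
  have hSL : S L = ∅ := Finset.card_eq_zero.1 <| by
    by_contra h
    exact (hsize L).not_gt (hL.trans_le (Nat.le_mul_of_pos_right _ (Nat.pos_of_ne_zero h)))
  let colors (c : ℕ) := cs (S c)
  refine ⟨Finset.univ.sup fun c : Fin L => (colors c).length, ⟨{
    coll := fun c => ClusterCollection.ofBalls (colors c) (Nat.mul_div_le β 2)
      (Finset.le_sup (f := fun c : Fin L => (colors c).length) (Finset.mem_univ c))
      (hball _) ((hfar _).imp FarApart.disjoint)
    cover := fun x => ?_
    sep := fun c i j hij => (hfar _).rel_get_of_ne FarApart.symm hij }⟩⟩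
  have hlayer (c : ℕ) (x : V) : x ∈ S c ∧ x ∉ S (c + 1) ↔ ∃ e ∈ colors c, x ∈ e.2 := by
    rw [hS]; exact hcover _ x
  obtain ⟨c, hxc, hc_uniq⟩ :=
    existsUnique_mem_sdiff_succ hanti (L := L) (x := x) (Finset.mem_univ x) (by simp [hSL])
  obtain ⟨e, he, hxe⟩ := (hlayer c x).1 hxc
  obtain ⟨i, rfl⟩ := List.get_of_mem he
  refine ⟨⟨c, i⟩, hxe, ?_⟩
  rintro ⟨c', j⟩ hxj
  obtain rfl : c' = c := hc_uniq c' ((hlayer c' x).2 ⟨_, List.get_mem _ _, hxj⟩)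
  obtain rfl : j = i := by
    by_contra hji
    exact Set.disjoint_left.1 ((hfar _).rel_get_of_ne FarApart.symm hji).disjoint hxj hxe
  rfl

end Carving

section Estimates

open Real

theorem nat_le_mul_log_of_pow_le {a N : ℝ} (ha : 0 < a) {r : ℕ}
    (h : (a + 1) ^ r ≤ N * a ^ r) : r ≤ (a + 1) * log N := by
  have hN : 0 < N := pos_of_mul_pos_left ((pow_pos (by linarith) r).trans_le h) (by positivity)
  have hlog : r * log ((a + 1) / a) ≤ log N := by
    rw [← log_pow, div_pow, log_le_log_iff (by positivity) hN, div_le_iff₀ (by positivity)]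
    exact h
  have hgap : 1 / (a + 1) ≤ log ((a + 1) / a) := by
    convert one_sub_inv_le_log_of_pos (x := (a + 1) / a) (by positivity) using 1
    field_simp
    ring
  have := mul_le_mul_of_nonneg_left hgap (Nat.cast_nonneg r)
  rw [mul_one_div, div_le_iff₀ (by linarith)] at this
  nlinarith

theorem le_ceil_rpow_one_div_pow (n : ℕ) {L : ℕ} (hL : L ≠ 0) :
    n ≤ ⌈(n : ℝ) ^ ((1 : ℝ) / L)⌉₊ ^ L := by
  have : (n : ℝ) = ((n : ℝ) ^ ((1 : ℝ) / L)) ^ L := by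
    rw [← rpow_natCast, ← rpow_mul n.cast_nonneg, one_div_mul_cancel (by exact_mod_cast hL),
      rpow_one]
  exact_mod_cast this.le.trans (pow_le_pow_left₀ (by positivity) (Nat.le_ceil _) L)

theorem two_mul_mul_le_ceil {x : ℝ} {n r : ℕ} (k : ℕ) (hx : 1 ≤ x) (hlog : 1 ≤ logb 2 n)
    (h : (⌈x⌉₊ + 1) ^ r ≤ n * ⌈x⌉₊ ^ r) :
    2 * (r * k) ≤ ⌈6 * k * x * (logb 2 n) ^ 3⌉₊ := by
  have ht : (1 : ℝ) ≤ ⌈x⌉₊ := hx.trans (Nat.le_ceil x)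
  have hr : (r : ℝ) ≤ (⌈x⌉₊ + 1) * log n :=
    nat_le_mul_log_of_pow_le (by linarith) (by exact_mod_cast h)
  have ht3 : (⌈x⌉₊ : ℝ) + 1 ≤ 3 * x := by linarith [Nat.ceil_lt_add_one (by linarith : 0 ≤ x)]
  have hlog_le : log n ≤ (logb 2 n) ^ 3 := by
    refine le_trans ?_ (le_self_pow₀ hlog (by norm_num))
    rw [logb, le_div_iff₀ (log_pos one_lt_two)] at hlog ⊢
    nlinarith [log_two_lt_d9]
  have hlog_pos : 0 < log n := by
    rw [logb, le_div_iff₀ (log_pos one_lt_two)] at hlog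
    linarith [log_pos one_lt_two]
  have hr3 : (r : ℝ) ≤ 3 * x * (logb 2 n) ^ 3 :=
    calc (r : ℝ) ≤ (⌈x⌉₊ + 1) * log n := hr
      _ ≤ 3 * x * (logb 2 n) ^ 3 := by gcongr
  rw [← Nat.cast_le (α := ℝ)]
  refine le_trans ?_ (Nat.le_ceil _)
  push_cast
  nlinarith [Nat.cast_nonneg (α := ℝ) k]

end Estimates

theorem statement2 :
    ∃ c : ℝ, 0 < c ∧
      ∀ (V : Type) [Fintype V] (G : SimpleGraph V),
        2 ≤ Fintype.card V →
        ∀ k : ℕ, 1 ≤ k →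
        ∀ L : ℕ, 1 ≤ L → (L : ℝ) ≤ Real.logb 2 (Fintype.card V) →
          ∃ κ : ℕ, Nonempty (NetworkDecomposition G L
            ⌈c * k * (Fintype.card V : ℝ) ^ ((1 : ℝ) / L) *
              (Real.logb 2 (Fintype.card V)) ^ 3⌉₊
            κ
            k) := by
  refine ⟨6, by norm_num, fun V _ G hn k _ L hL hlogL => ?_⟩
  have hx : 1 ≤ (Fintype.card V : ℝ) ^ ((1 : ℝ) / L) :=
    Real.one_le_rpow (by exact_mod_cast (by omega : 1 ≤ Fintype.card V)) (by positivity)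
  have hlog : 1 ≤ Real.logb 2 (Fintype.card V) := le_trans (by exact_mod_cast hL) hlogL
  refine exists_networkDecomposition G (fun r hr => two_mul_mul_le_ceil k hx hlog hr) ?_
  exact (le_ceil_rpow_one_div_pow _ (by omega)).trans_lt
    (Nat.pow_lt_pow_left (Nat.lt_succ_self _) (by omega))
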